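/- arXiv:2512.11217 — 4 statements merged into one kernel-verified Lean document; each statement's English description precedes it below -/
import Mathlib

section
/- For G-valued random variables X and Y with H(X) and H(Y) finite, |H(X) - H(Y)| <= 2 d[X;Y], where d[X;Y] = H(X' - Y') - H(X)/2 - H(Y)/2 with X', Y' independent copies of X, Y. -/
open scoped BigOperators Pointwise
noncomputable section

/-- A finitely supported probability mass function. -/
def IsPMF {α : Type*} (p : α → ℝ) : Prop :=
  (∀ x, 0 ≤ p x) ∧ (Function.support p).Finite ∧ ∑ᶠ x, p x = 1

/-- Shannon entropy of a pmf. -/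
def ent {α : Type*} (p : α → ℝ) : ℝ := ∑ᶠ x, -(p x * Real.log (p x))

/-- Convolution of pmfs: the distribution of the sum of independent random variables. -/
def conv {G : Type*} [AddCommGroup G] (p q : G → ℝ) : G → ℝ :=
  fun z => ∑ᶠ x, p x * q (z - x)

/-- Distribution of the negation. -/
def negp {G : Type*} [AddCommGroup G] (p : G → ℝ) : G → ℝ := fun x => p (-x)

/-- Entropic Ruzsa distance between (the distributions of) two random variables. -/
def rdist {G : Type*} [AddCommGroup G] (p q : G → ℝ) : ℝ :=
  ent (conv p (negp q)) - ent p / 2 - ent q / 2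

/-- Distribution of the sum of `n` iid copies. -/
def iterConv {G : Type*} [AddCommGroup G] (p : G → ℝ) : ℕ → G → ℝ
  | 0 => fun x => Set.indicator ({0} : Set G) (fun _ => (1 : ℝ)) x
  | n + 1 => conv (iterConv p n) p

/-!
Writing `conv p q z = ∑ y, q y * p (z - y)` exhibits the law of `X + Y` as a mixture of the
translates of the law of `X`. Since `negMulLog` is concave, entropy is concave in the law, and
every translate has entropy `H(X)`; hence `H(X) ≤ H(X + Y)`, and symmetrically `H(Y) ≤ H(X + Y)`.
Applied to `X` and `-Y`, both bounds `H(X), H(Y) ≤ H(X - Y)` rearrange into the claim.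
-/

open Real Function

section Entropy

variable {α : Type*}

lemma ent_eq_sum_negMulLog {p : α → ℝ} {s : Finset α} (hs : support p ⊆ s) :
    ent p = ∑ x ∈ s, negMulLog (p x) := by
  have hent : ent p = ∑ᶠ x, negMulLog (p x) := by
    simp only [ent, negMulLog, neg_mul]
  rw [hent]
  refine finsum_eq_sum_of_support_subset _ (fun x hx => hs fun hpx => hx ?_)
  simp [hpx]

lemma IsPMF.sum_eq_one {q : α → ℝ} (hq : IsPMF q) {s : Finset α} (hs : support q ⊆ s) :
    ∑ x ∈ s, q x = 1 := by
  rw [← finsum_eq_sum_of_support_subset q hs, hq.2.2]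

end Entropy

section Convolution

variable {G : Type*} [AddCommGroup G]

lemma conv_comm (p q : G → ℝ) : conv p q = conv q p := by
  funext z
  rw [conv, ← finsum_comp_equiv (Equiv.subLeft z)]
  simp [conv, mul_comm]

lemma conv_eq_sum {p q : G → ℝ} {T : Finset G} (hT : support q ⊆ T) (z : G) :
    conv p q z = ∑ y ∈ T, q y * p (z - y) := by
  rw [conv_comm]
  exact finsum_eq_sum_of_support_subset _ ((support_mul_subset_left _ _).trans hT)

lemma support_conv_subset [DecidableEq G] {p q : G → ℝ} {S T : Finset G}
    (hS : support p ⊆ S) (hT : support q ⊆ T) : support (conv p q) ⊆ ↑(S + T) := by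
  intro z hz
  rw [mem_support, conv_eq_sum hT] at hz
  obtain ⟨y, hyT, hy⟩ := Finset.exists_ne_zero_of_sum_ne_zero hz
  have hmem := Finset.add_mem_add (hS (right_ne_zero_of_mul hy)) hyT
  rwa [sub_add_cancel] at hmem

lemma ent_comp_sub_right (p : G → ℝ) (y : G) : ent (fun z => p (z - y)) = ent p :=
  finsum_comp_equiv (Equiv.subRight y) (f := fun x => -(p x * Real.log (p x)))

lemma isPMF_negp {q : G → ℝ} (hq : IsPMF q) : IsPMF (negp q) := by
  obtain ⟨hq0, hqfin, hqsum⟩ := hq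
  refine ⟨fun x => hq0 _, ?_, ?_⟩
  · exact hqfin.preimage neg_injective.injOn
  · rw [← hqsum]
    exact finsum_comp_equiv (Equiv.neg G) (f := q)

lemma ent_negp (q : G → ℝ) : ent (negp q) = ent q :=
  finsum_comp_equiv (Equiv.neg G) (f := fun x => -(q x * Real.log (q x)))

lemma sum_mul_negMulLog_le_negMulLog_conv {p q : G → ℝ} (hp : ∀ x, 0 ≤ p x) (hq : IsPMF q)
    {T : Finset G} (hT : support q ⊆ T) (z : G) :
    ∑ y ∈ T, q y * negMulLog (p (z - y)) ≤ negMulLog (conv p q z) := by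
  rw [conv_eq_sum hT]
  simpa using concaveOn_negMulLog.le_map_sum (fun y _ => hq.1 y) (hq.sum_eq_one hT)
    (fun y _ => hp (z - y))

theorem ent_le_ent_conv {p q : G → ℝ} (hp : ∀ x, 0 ≤ p x) (hpfin : (support p).Finite)
    (hq : IsPMF q) : ent p ≤ ent (conv p q) := by
  classical
  set S := hpfin.toFinset
  set T := hq.2.1.toFinset
  have hS : support p ⊆ S := by simp [S]
  have hT : support q ⊆ T := by simp [T]
  have hshift : ∀ y ∈ T, ent p = ∑ z ∈ S + T, negMulLog (p (z - y)) := fun y hy => by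
    rw [← ent_comp_sub_right p y]
    refine ent_eq_sum_negMulLog fun z hz => ?_
    have hmem := Finset.add_mem_add (hS hz) hy
    rwa [sub_add_cancel] at hmem
  have hconv : ent (conv p q) = ∑ z ∈ S + T, negMulLog (conv p q z) :=
    ent_eq_sum_negMulLog (support_conv_subset hS hT)
  calc ent p = ∑ y ∈ T, q y * ent p := by rw [← Finset.sum_mul, hq.sum_eq_one hT, one_mul]
    _ = ∑ y ∈ T, ∑ z ∈ S + T, q y * negMulLog (p (z - y)) :=
        Finset.sum_congr rfl fun y hy => by rw [hshift y hy, Finset.mul_sum]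
    _ = ∑ z ∈ S + T, ∑ y ∈ T, q y * negMulLog (p (z - y)) := Finset.sum_comm
    _ ≤ ent (conv p q) := by
        rw [hconv]
        exact Finset.sum_le_sum fun z _ => sum_mul_negMulLog_le_negMulLog_conv hp hq hT z

theorem ent_le_ent_conv_right {p q : G → ℝ} (hp : IsPMF p) (hq : ∀ x, 0 ≤ q x)
    (hqfin : (support q).Finite) : ent q ≤ ent (conv p q) :=
  conv_comm p q ▸ ent_le_ent_conv hq hqfin hp

end Convolution

/-- `|H(X) - H(Y)| ≤ 2 d[X;Y]`. -/
theorem abs_entropy_diff_le_two_rdist {G : Type*} [AddCommGroup G] (p q : G → ℝ)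
    (hp : IsPMF p) (hq : IsPMF q) :
    |ent p - ent q| ≤ 2 * rdist p q := by
  have hnq := isPMF_negp hq
  have hle_left : ent p ≤ ent (conv p (negp q)) := ent_le_ent_conv hp.1 hp.2.1 hnq
  have hle_right : ent q ≤ ent (conv p (negp q)) :=
    ent_negp q ▸ ent_le_ent_conv_right hp hnq.1 hnq.2.1
  rw [abs_le, rdist]
  constructor <;> linarith
end
end

section
/- Fibring application: Let X, Y be finitely supported G-valued random variables, n >= 2 an integer, and write nX for the sum of n iid copies of X (similarly nY). Then d[X;Y] + d[(n-1)X;(n-1)Y] >= d[nX;nY] + d[X | nX ; Y | nY], where the conditional Ruzsa distance d[X|nX; Y|nY] averages d[X_1 | X_1+...+X_n = t ; Y_1 | Y_1+...+Y_n = s] over the joint values (t,s). -/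
open scoped BigOperators Pointwise
noncomputable section

/-- Conditional distribution of `X₁` given `X₁ + ⋯ + Xₙ = t`, for `X₁, …, Xₙ` iid with pmf `p`. -/
def condAt {G : Type*} [AddCommGroup G] (p : G → ℝ) (n : ℕ) (t : G) : G → ℝ :=
  fun x => p x * iterConv p (n - 1) (t - x) / iterConv p n t

/-- Conditional entropic Ruzsa distance `d[X | nX ; Y | nY]`, averaging over the values of the
sums `nX` and `nY`. -/
def condRdist {G : Type*} [AddCommGroup G] (p q : G → ℝ) (n : ℕ) : ℝ :=
  ∑ᶠ t, ∑ᶠ s, iterConv p n t * iterConv q n s * rdist (condAt p n t) (condAt q n s)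

/-!
Write `nX = X + X'` and `nY = Y + Y'` with `X, X', Y, Y'` independent, `X'` and `Y'` being sums of
`n - 1` copies. Given `nX = t` and `nY = s`, `X` and `Y` are independent with laws `condAt p n t`
and `condAt q n s`, so `d[X | nX; Y | nY] = H(X - Y | nX, nY) - H(X | nX) / 2 - H(Y | nY) / 2`,
and the chain rule gives `H(X | nX) = H(X) + H(X') - H(nX)`. As `nX - nY = (X - Y) + (X' - Y')`
is a function of `(nX, nY)`, conditioning on the finer data lowers entropy:
`H(X - Y | nX, nY) ≤ H(X - Y | nX - nY) = H(X - Y) + H(X' - Y') - H(nX - nY)`,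
again by the chain rule. Adding up gives the claim.

Conditional entropies are summed fibre by fibre through `fiberEnt`, which is superadditive by
Gibbs' inequality.
-/

open Function Real

section Finsum

variable {α β M : Type*} [AddCommMonoid M]

theorem exists_ne_zero_of_finsum_ne_zero {f : α → M} (h : ∑ᶠ a, f a ≠ 0) : ∃ a, f a ≠ 0 := by
  by_contra! hf
  exact h (finsum_eq_zero_of_forall_eq_zero hf)

theorem finsum_finsum_eq_sum_sum {f : α → β → M} {s : Finset α} {t : Finset β}
    (h : ∀ a b, f a b ≠ 0 → a ∈ s ∧ b ∈ t) :
    ∑ᶠ a, ∑ᶠ b, f a b = ∑ a ∈ s, ∑ b ∈ t, f a b := by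
  have inner : ∀ a, ∑ᶠ b, f a b = ∑ b ∈ t, f a b := fun a =>
    finsum_eq_sum_of_support_subset _ fun b hb => (h a b hb).2
  simp only [inner]
  refine finsum_eq_sum_of_support_subset _ fun a ha => ?_
  obtain ⟨b, -, hb⟩ := Finset.exists_ne_zero_of_sum_ne_zero ha
  exact (h a b hb).1

theorem finsum_comm_of_finite {f : α → β → M} {s : Set α} {t : Set β} (hs : s.Finite)
    (ht : t.Finite) (h : ∀ a b, f a b ≠ 0 → a ∈ s ∧ b ∈ t) :
    ∑ᶠ a, ∑ᶠ b, f a b = ∑ᶠ b, ∑ᶠ a, f a b := by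
  rw [finsum_finsum_eq_sum_sum (s := hs.toFinset) (t := ht.toFinset) (by simpa using h),
    finsum_finsum_eq_sum_sum (s := ht.toFinset) (t := hs.toFinset)
      (by simpa using fun b a hab => (h a b hab).symm), Finset.sum_comm]

theorem finsum_finsum_shear {G : Type*} [AddCommGroup G] {H : G → G → M} {s t : Set G}
    (hs : s.Finite) (ht : t.Finite) (h : ∀ z x, H z x ≠ 0 → x ∈ s ∧ z - x ∈ t) :
    ∑ᶠ z, ∑ᶠ x, H z x = ∑ᶠ x, ∑ᶠ y, H (x + y) x := by
  rw [finsum_comm_of_finite (hs.add ht) hs fun z x hzx => ?_]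
  · exact finsum_congr fun x => (finsum_comp_equiv (Equiv.addLeft x)).symm
  · obtain ⟨hx, hzx⟩ := h z x hzx
    exact ⟨Set.mem_add.2 ⟨x, hx, z - x, hzx, add_sub_cancel x z⟩, hx⟩

end Finsum

section Convolution

variable {G : Type*} [AddCommGroup G] {f g h : G → ℝ}

theorem exists_ne_zero_of_conv_ne_zero {z : G} (hz : conv f g z ≠ 0) :
    ∃ x, f x ≠ 0 ∧ g (z - x) ≠ 0 := by
  by_contra! hfg
  exact hz (finsum_eq_zero_of_forall_eq_zero fun x => by
    by_cases hx : f x = 0 <;> simp [hx, hfg])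

theorem support_conv_subset_s8 : support (conv f g) ⊆ support f + support g := fun z hz =>
  have ⟨x, hx, hzx⟩ := exists_ne_zero_of_conv_ne_zero hz
  Set.mem_add.2 ⟨x, hx, z - x, hzx, add_sub_cancel x z⟩

theorem conv_nonneg (hf : ∀ x, 0 ≤ f x) (hg : ∀ x, 0 ≤ g x) (z : G) : 0 ≤ conv f g z :=
  finsum_nonneg fun x => mul_nonneg (hf x) (hg _)

theorem conv_comm_s8 (f g : G → ℝ) : conv f g = conv g f := by
  ext z
  simp only [conv]
  rw [← finsum_comp_equiv (Equiv.subLeft z)]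
  simp [mul_comm]

theorem finsum_conv (hf : (support f).Finite) (hg : (support g).Finite) :
    ∑ᶠ z, conv f g z = (∑ᶠ x, f x) * ∑ᶠ y, g y := by
  simp only [conv]
  rw [finsum_finsum_shear hf hg fun z x h => ⟨left_ne_zero_of_mul h, right_ne_zero_of_mul h⟩,
    finsum_mul]
  simp [mul_finsum]

theorem conv_div_div (f g : G → ℝ) (c d : ℝ) (z : G) :
    conv (fun x => f x / c) (fun y => g y / d) z = conv f g z / (c * d) := by
  simp only [conv, div_mul_div_comm, div_eq_mul_inv _ (c * d), finsum_mul]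

theorem conv_assoc (h : G → ℝ) (hf : (support f).Finite) (hg : (support g).Finite) :
    conv (conv f g) h = conv f (conv g h) := by
  ext z
  simp only [conv, finsum_mul]
  rw [finsum_finsum_shear hf hg fun y x hxy =>
    ⟨left_ne_zero_of_mul (left_ne_zero_of_mul hxy), right_ne_zero_of_mul (left_ne_zero_of_mul hxy)⟩]
  simp [mul_finsum, mul_assoc, sub_sub]

theorem negp_conv (f g : G → ℝ) : negp (conv f g) = conv (negp f) (negp g) := by
  ext z
  simp only [negp, conv]
  rw [← finsum_comp_equiv (Equiv.neg G)]
  simp [sub_eq_add_neg, add_comm]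

theorem finsum_negp (f : G → ℝ) : ∑ᶠ x, negp f x = ∑ᶠ x, f x :=
  finsum_comp_equiv (Equiv.neg G)

theorem conv_conv_negp_conv {p p' q q' : G → ℝ} (hp : (support p).Finite)
    (hp' : (support p').Finite) (hq : (support q).Finite) :
    conv (conv p p') (negp (conv q q')) = conv (conv p (negp q)) (conv p' (negp q')) := by
  have hnq : (support (negp q)).Finite := hq.neg
  rw [negp_conv, conv_assoc _ hp hp', ← conv_assoc _ hp' hnq, conv_comm_s8 p' (negp q),
    conv_assoc _ hnq hp', ← conv_assoc _ hp hnq]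

end Convolution

namespace IsPMF

variable {α G : Type*} [AddCommGroup G]

theorem nonneg {p : α → ℝ} (hp : IsPMF p) (x : α) : 0 ≤ p x := hp.1 x

theorem finite_support {p : α → ℝ} (hp : IsPMF p) : (support p).Finite := hp.2.1

theorem finsum_eq_one {p : α → ℝ} (hp : IsPMF p) : ∑ᶠ x, p x = 1 := hp.2.2

variable {p q : G → ℝ}

protected theorem conv (hp : IsPMF p) (hq : IsPMF q) : IsPMF (conv p q) :=
  ⟨conv_nonneg hp.nonneg hq.nonneg, (hp.finite_support.add hq.finite_support).subset
    support_conv_subset_s8, by rw [finsum_conv hp.finite_support hq.finite_support,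
      hp.finsum_eq_one, hq.finsum_eq_one, one_mul]⟩

protected theorem negp (hp : IsPMF p) : IsPMF (negp p) :=
  ⟨fun x => hp.nonneg (-x), hp.finite_support.neg, (finsum_negp p).trans hp.finsum_eq_one⟩

protected theorem iterConv (hp : IsPMF p) : ∀ n, IsPMF (iterConv p n)
  | 0 => ⟨fun _ => Set.indicator_nonneg (fun _ _ => zero_le_one) _,
      (Set.finite_singleton 0).subset Set.support_indicator_subset,
      by simp [iterConv, ← finsum_mem_def]⟩
  | n + 1 => (hp.iterConv n).conv hp

end IsPMF

section FiberEntropy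

variable {α ι : Type*}

/-- `M * ent (fun x => j x / M)` for `j ≥ 0` of total mass `M` (`fiberEnt_eq_mul_ent`), written
without the division so that null fibres need no special case. -/
def fiberEnt (j : α → ℝ) : ℝ := ∑ᶠ x, j x * (log (∑ᶠ y, j y) - log (j x))

theorem ent_eq_sum {f : α → ℝ} {s : Finset α} (hs : support f ⊆ s) :
    ent f = ∑ x ∈ s, -(f x * log (f x)) :=
  finsum_eq_sum_of_support_subset _ fun x hx => hs fun h => hx (by simp [h])

theorem exists_ne_zero_of_fiberEnt_ne_zero {j : α → ℝ} (h : fiberEnt j ≠ 0) : ∃ x, j x ≠ 0 :=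
  have ⟨x, hx⟩ := exists_ne_zero_of_finsum_ne_zero h
  ⟨x, left_ne_zero_of_mul hx⟩

theorem eq_zero_of_finsum_eq_zero_of_nonneg {j : α → ℝ} (hj0 : ∀ x, 0 ≤ j x)
    (hj : (support j).Finite) (hJ : ∑ᶠ x, j x = 0) (x : α) : j x = 0 :=
  le_antisymm (hJ ▸ single_le_finsum x hj hj0) (hj0 x)

theorem fiberEnt_eq_mul_ent {j : α → ℝ} {M : ℝ} (hj0 : ∀ x, 0 ≤ j x) (hj : (support j).Finite)
    (hM : ∑ᶠ x, j x = M) : fiberEnt j = M * ent (fun x => j x / M) := by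
  rcases eq_or_ne M 0 with rfl | hM0
  · simp [fiberEnt, eq_zero_of_finsum_eq_zero_of_nonneg hj0 hj hM]
  rw [fiberEnt, ent, mul_finsum, hM]
  refine finsum_congr fun x => ?_
  rcases eq_or_ne (j x) 0 with hx | hx
  · simp [hx]
  rw [log_div hx hM0]
  field_simp
  ring

theorem mul_log_sub_log_le {j r J R : ℝ} (hj : 0 ≤ j) (hr : 0 ≤ r) (hjr : j ≠ 0 → r ≠ 0)
    (hJ : 0 < J) (hR : 0 < R) :
    j * (log J - log j) ≤ j * (log R - log r) + r * J / R - j := by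
  rcases hj.eq_or_lt with rfl | hj
  · simp only [zero_mul, sub_zero, zero_add]
    positivity
  have hr : 0 < r := hr.lt_of_ne (hjr hj.ne').symm
  have key := log_le_sub_one_of_pos (show 0 < r * J / (j * R) by positivity)
  rw [log_div (by positivity) (by positivity), log_mul hr.ne' hJ.ne', log_mul hj.ne' hR.ne'] at key
  have hmul := mul_le_mul_of_nonneg_left key hj.le
  have hrhs : j * (r * J / (j * R) - 1) = r * J / R - j := by field_simp
  linarith

/-- Gibbs' inequality. -/
theorem fiberEnt_le {j r : α → ℝ} (hj0 : ∀ x, 0 ≤ j x) (hj : (support j).Finite)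
    (hr0 : ∀ x, 0 ≤ r x) (hr : (support r).Finite) (hjr : ∀ x, j x ≠ 0 → r x ≠ 0) :
    fiberEnt j ≤ ∑ᶠ x, j x * (log (∑ᶠ y, r y) - log (r x)) := by
  rcases (finsum_nonneg hj0).eq_or_lt with hJ | hJ
  · simp [fiberEnt, eq_zero_of_finsum_eq_zero_of_nonneg hj0 hj hJ.symm]
  obtain ⟨x₀, hx₀⟩ : ∃ x, j x ≠ 0 := by
    by_contra! h
    simp [h] at hJ
  have hR : 0 < ∑ᶠ y, r y :=
    ((hr0 x₀).lt_of_ne (hjr x₀ hx₀).symm).trans_le (single_le_finsum x₀ hr hr0)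
  classical
  set S := hj.toFinset ∪ hr.toFinset
  have hjS : support j ⊆ S := fun x hx => by simp [S, hx]
  have hrS : support r ⊆ S := fun x hx => by simp [S, hx]
  have hsub : ∀ {f : α → ℝ}, support f ⊆ support j → support f ⊆ S := fun h => h.trans hjS
  rw [fiberEnt, finsum_eq_sum_of_support_subset _ (hsub (support_mul_subset_left _ _)),
    finsum_eq_sum_of_support_subset _ (hsub (support_mul_subset_left _ _))]
  calc ∑ x ∈ S, j x * (log (∑ᶠ y, j y) - log (j x))
      ≤ ∑ x ∈ S, (j x * (log (∑ᶠ y, r y) - log (r x)) + r x * (∑ᶠ y, j y) / (∑ᶠ y, r y)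
          - j x) :=
        Finset.sum_le_sum fun x _ => mul_log_sub_log_le (hj0 x) (hr0 x) (hjr x) hJ hR
    _ = ∑ x ∈ S, j x * (log (∑ᶠ y, r y) - log (r x)) := by
        rw [Finset.sum_sub_distrib, Finset.sum_add_distrib, ← Finset.sum_div, ← Finset.sum_mul,
          ← finsum_eq_sum_of_support_subset _ hrS, ← finsum_eq_sum_of_support_subset _ hjS,
          mul_div_cancel_left₀ _ hR.ne', add_sub_cancel_right]

/-- Conditioning on a finer partition lowers entropy. -/
theorem finsum_fiberEnt_le {j : ι → α → ℝ} {s : Set ι} {t : Set α} (hs : s.Finite)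
    (ht : t.Finite) (hj0 : ∀ i x, 0 ≤ j i x) (hj : ∀ i x, j i x ≠ 0 → i ∈ s ∧ x ∈ t) :
    ∑ᶠ i, fiberEnt (j i) ≤ fiberEnt (fun x => ∑ᶠ i, j i x) := by
  set m := fun x => ∑ᶠ i, j i x
  have hjs : ∀ x, (support fun i => j i x).Finite := fun x =>
    hs.subset fun i hi => (hj i x hi).1
  have hjt : ∀ i, (support (j i)).Finite := fun i => ht.subset fun x hx => (hj i x hx).2
  have hm : (support m).Finite := ht.subset fun x hx => by
    obtain ⟨i, hi⟩ : ∃ i, j i x ≠ 0 := by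
      by_contra! h
      simp [m, h] at hx
    exact (hj i x hi).2
  have hjm : ∀ i x, j i x ≠ 0 → m x ≠ 0 := fun i x hi =>
    (((hj0 i x).lt_of_ne hi.symm).trans_le (single_le_finsum i (hjs x) (hj0 · x))).ne'
  have hvanish : ∀ i ∉ s, ∀ x, j i x = 0 := fun i hi x => by
    by_contra h
    exact hi (hj i x h).1
  calc ∑ᶠ i, fiberEnt (j i)
      ≤ ∑ᶠ i, ∑ᶠ x, j i x * (log (∑ᶠ y, m y) - log (m x)) := by
        refine finsum_le_finsum' (hs.subset fun i hi => ?_) (hs.subset fun i hi => ?_)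
          fun i => fiberEnt_le (hj0 i) (hjt i) (fun x => finsum_nonneg (hj0 · x)) hm (hjm i)
        · by_contra h
          simp [fiberEnt, hvanish i h] at hi
        · by_contra h
          simp [hvanish i h] at hi
    _ = fiberEnt m := by
        rw [finsum_comm_of_finite hs ht fun i x h => hj i x (left_ne_zero_of_mul h)]
        simp only [← finsum_mul]
        rfl

end FiberEntropy

section Fibring

variable {G : Type*} [AddCommGroup G]

/-- The joint law of `(X, X + Y)` on the fibre `X + Y = z`; its total mass is `conv f g z`. -/
def convFiber (f g : G → ℝ) (z : G) : G → ℝ := fun x => f x * g (z - x)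

def condConv (f g : G → ℝ) (z : G) : G → ℝ := fun x => convFiber f g z x / conv f g z

variable {f g p p' q q' : G → ℝ}

theorem finsum_convFiber (f g : G → ℝ) (z : G) : ∑ᶠ x, convFiber f g z x = conv f g z := rfl

theorem convFiber_nonneg (hf : ∀ x, 0 ≤ f x) (hg : ∀ x, 0 ≤ g x) (z x : G) :
    0 ≤ convFiber f g z x :=
  mul_nonneg (hf x) (hg _)

theorem mem_support_of_convFiber_ne_zero {z x : G} (h : convFiber f g z x ≠ 0) :
    x ∈ support f ∧ z ∈ support f + support g :=
  ⟨left_ne_zero_of_mul h,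
    Set.mem_add.2 ⟨x, left_ne_zero_of_mul h, z - x, right_ne_zero_of_mul h, add_sub_cancel x z⟩⟩

theorem finite_support_convFiber (hf : (support f).Finite) (z : G) :
    (support (convFiber f g z)).Finite :=
  hf.subset fun _ hx => (mem_support_of_convFiber_ne_zero hx).1

theorem fiberEnt_convFiber (hf : IsPMF f) (hg : IsPMF g) (z : G) :
    fiberEnt (convFiber f g z) = conv f g z * ent (condConv f g z) :=
  fiberEnt_eq_mul_ent (convFiber_nonneg hf.nonneg hg.nonneg z)
    (finite_support_convFiber hf.finite_support z) rfl

theorem support_fiberEnt_convFiber_subset :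
    support (fun z => fiberEnt (convFiber f g z)) ⊆ support f + support g := fun _ hz =>
  have ⟨_, hx⟩ := exists_ne_zero_of_fiberEnt_ne_zero hz
  (mem_support_of_convFiber_ne_zero hx).2

theorem finsum_fiberEnt_convFiber (hf : IsPMF f) (hg : IsPMF g) :
    ∑ᶠ z, fiberEnt (convFiber f g z) = ent f + ent g - ent (conv f g) := by
  classical
  set P := conv f g
  set Sf := hf.finite_support.toFinset
  set Sg := hg.finite_support.toFinset
  have hSf : support f ⊆ Sf := by simp [Sf]
  have hSg : support g ⊆ Sg := by simp [Sg]
  have hsupp : ∀ x y (c : ℝ), f x * g y * c ≠ 0 → x ∈ Sf ∧ y ∈ Sg := fun x y c h =>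
    ⟨hSf (left_ne_zero_of_mul (left_ne_zero_of_mul h)),
      hSg (right_ne_zero_of_mul (left_ne_zero_of_mul h))⟩
  have hshear : ∀ F : G → G → ℝ, ∑ᶠ z, ∑ᶠ x, f x * g (z - x) * F z x
      = ∑ x ∈ Sf, ∑ y ∈ Sg, f x * g y * F (x + y) x := fun F => by
    rw [finsum_finsum_shear hf.finite_support hg.finite_support fun z x h =>
      ⟨left_ne_zero_of_mul (left_ne_zero_of_mul h), right_ne_zero_of_mul (left_ne_zero_of_mul h)⟩]
    simpa using finsum_finsum_eq_sum_sum fun x y => hsupp x y (F (x + y) x)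
  have hentP : ent P = ∑ x ∈ Sf, ∑ y ∈ Sg, f x * g y * -log (P (x + y)) := by
    rw [← hshear fun z _ => -log (P z), ent]
    exact finsum_congr fun z => by rw [← finsum_mul]; simp [P, conv]
  have hlog : ∀ x y, f x * g y * (log (P (x + y)) - log (f x * g y))
      = g y * -(f x * log (f x)) + f x * -(g y * log (g y)) - f x * g y * -log (P (x + y)) := by
    intro x y
    rcases eq_or_ne (f x * g y) 0 with h | h
    · rcases mul_eq_zero.1 h with h | h <;> simp [h]
    rw [log_mul (left_ne_zero_of_mul h) (right_ne_zero_of_mul h)]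
    ring
  simp only [fiberEnt, finsum_convFiber]
  simp only [convFiber]
  rw [hshear fun z x => log (P z) - log (f x * g (z - x))]
  simp only [add_sub_cancel_left, hlog, Finset.sum_sub_distrib, Finset.sum_add_distrib,
    ← Finset.mul_sum, ← Finset.sum_mul, hentP, ent_eq_sum hSf, ent_eq_sum hSg]
  rw [← finsum_eq_sum_of_support_subset _ hSf, ← finsum_eq_sum_of_support_subset _ hSg,
    hf.finsum_eq_one, hg.finsum_eq_one]
  ring

/-- For `X, X', Y, Y'` independent with laws `p, p', q, q'`: the law of `X - Y` on the fibre
`X + X' = t`, `Y + Y' = s`. -/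
def diffFiber (p p' q q' : G → ℝ) (t s : G) : G → ℝ :=
  conv (convFiber p p' t) (negp (convFiber q q' s))

theorem diffFiber_nonneg (hp : ∀ x, 0 ≤ p x) (hp' : ∀ x, 0 ≤ p' x) (hq : ∀ x, 0 ≤ q x)
    (hq' : ∀ x, 0 ≤ q' x) (t s u : G) : 0 ≤ diffFiber p p' q q' t s u :=
  conv_nonneg (convFiber_nonneg hp hp' t) (fun _ => convFiber_nonneg hq hq' s _) u

theorem mem_support_of_diffFiber_ne_zero {t s u : G} (h : diffFiber p p' q q' t s u ≠ 0) :
    t ∈ support p + support p' ∧ s ∈ support q + support q' ∧ u ∈ support p - support q := by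
  obtain ⟨x, hx, hxu⟩ := exists_ne_zero_of_conv_ne_zero h
  obtain ⟨hpx, ht⟩ := mem_support_of_convFiber_ne_zero hx
  obtain ⟨hqx, hs⟩ := mem_support_of_convFiber_ne_zero hxu
  exact ⟨ht, hs, Set.mem_sub.2 ⟨x, hpx, _, hqx, by abel⟩⟩

theorem fiberEnt_diffFiber (hp : IsPMF p) (hp' : IsPMF p') (hq : IsPMF q) (hq' : IsPMF q')
    (t s : G) :
    fiberEnt (diffFiber p p' q q' t s)
      = conv p p' t * conv q q' s * ent (conv (condConv p p' t) (negp (condConv q q' s))) := by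
  have hfin := finite_support_convFiber (g := p') hp.finite_support t
  have hfin' : (support (negp (convFiber q q' s))).Finite :=
    (finite_support_convFiber hq.finite_support s).neg
  rw [fiberEnt_eq_mul_ent (diffFiber_nonneg hp.nonneg hp'.nonneg hq.nonneg hq'.nonneg t s)
    ((hfin.add hfin').subset support_conv_subset_s8)
    (by rw [diffFiber, finsum_conv hfin hfin', finsum_negp, finsum_convFiber, finsum_convFiber])]
  exact congrArg _ (congrArg ent (funext fun u => (conv_div_div _ _ _ _ u).symm))

theorem finsum_diffFiber_sub (hp : (support p).Finite) (hp' : (support p').Finite) (w u : G) :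
    ∑ᶠ t, diffFiber p p' q q' t (t - w) u
      = convFiber (conv p (negp q)) (conv p' (negp q')) w u := by
  simp only [diffFiber, conv, convFiber, negp]
  rw [finsum_finsum_shear hp hp' fun t x h =>
    ⟨left_ne_zero_of_mul (left_ne_zero_of_mul h), right_ne_zero_of_mul (left_ne_zero_of_mul h)⟩,
    finsum_mul]
  refine finsum_congr fun x => ?_
  rw [mul_finsum]
  refine finsum_congr fun y => ?_
  rw [show x + y - w - -(u - x) = -(w - u - y) by abel, add_sub_cancel_left]
  ring

theorem finsum_finsum_fiberEnt_diffFiber_le (hp : IsPMF p) (hq : IsPMF q) (hp' : IsPMF p')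
    (hq' : IsPMF q') :
    ∑ᶠ t, ∑ᶠ s, fiberEnt (diffFiber p p' q q' t s)
      ≤ ent (conv p (negp q)) + ent (conv p' (negp q'))
        - ent (conv (conv p p') (negp (conv q q'))) := by
  have hSP := hp.finite_support.add hp'.finite_support
  have hSQ := hq.finite_support.add hq'.finite_support
  have hSU := hp.finite_support.sub hq.finite_support
  have hsupp : ∀ t s, fiberEnt (diffFiber p p' q q' t s) ≠ 0 →
      t ∈ support p + support p' ∧ s ∈ support q + support q' := fun t s h =>
    have ⟨_, hu⟩ := exists_ne_zero_of_fiberEnt_ne_zero h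
    (mem_support_of_diffFiber_ne_zero hu).imp_right And.left
  have hfibre : ∀ w, ∑ᶠ t, fiberEnt (diffFiber p p' q q' t (t - w))
      ≤ fiberEnt (convFiber (conv p (negp q)) (conv p' (negp q')) w) := fun w => by
    rw [← funext (finsum_diffFiber_sub hp.finite_support hp'.finite_support w)]
    exact finsum_fiberEnt_le hSP hSU
      (fun t => diffFiber_nonneg hp.nonneg hp'.nonneg hq.nonneg hq'.nonneg t (t - w))
      fun t u h => (mem_support_of_diffFiber_ne_zero h).imp_right And.right
  calc ∑ᶠ t, ∑ᶠ s, fiberEnt (diffFiber p p' q q' t s)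
      = ∑ᶠ t, ∑ᶠ w, fiberEnt (diffFiber p p' q q' t (t - w)) :=
        finsum_congr fun t => (finsum_comp_equiv (Equiv.subLeft t)).symm
    _ = ∑ᶠ w, ∑ᶠ t, fiberEnt (diffFiber p p' q q' t (t - w)) := by
        refine finsum_comm_of_finite hSP (hSP.sub hSQ) fun t w h => ?_
        obtain ⟨ht, hs⟩ := hsupp t _ h
        exact ⟨ht, Set.mem_sub.2 ⟨t, ht, t - w, hs, sub_sub_cancel t w⟩⟩
    _ ≤ ∑ᶠ w, fiberEnt (convFiber (conv p (negp q)) (conv p' (negp q')) w) := by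
        refine finsum_le_finsum' ((hSP.sub hSQ).subset fun w hw => ?_)
          (((hp.conv hq.negp).finite_support.add (hp'.conv hq'.negp).finite_support).subset
            support_fiberEnt_convFiber_subset) hfibre
        obtain ⟨t, ht⟩ := exists_ne_zero_of_finsum_ne_zero hw
        obtain ⟨ht, hs⟩ := hsupp t _ ht
        exact Set.mem_sub.2 ⟨t, ht, t - w, hs, sub_sub_cancel t w⟩
    _ = _ := by
        rw [finsum_fiberEnt_convFiber (hp.conv hq.negp) (hp'.conv hq'.negp),
          conv_conv_negp_conv hp.finite_support hp'.finite_support hq.finite_support]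

end Fibring

section ConditionalRuzsa

variable {α β G : Type*} [AddCommGroup G]

theorem finsum_finsum_mul_rdist {P : α → ℝ} {Q : β → ℝ} (hP : IsPMF P) (hQ : IsPMF Q)
    (μ : α → G → ℝ) (ν : β → G → ℝ) :
    ∑ᶠ t, ∑ᶠ s, P t * Q s * rdist (μ t) (ν s)
      = ∑ᶠ t, ∑ᶠ s, P t * Q s * ent (conv (μ t) (negp (ν s)))
        - (∑ᶠ t, P t * ent (μ t)) / 2 - (∑ᶠ s, Q s * ent (ν s)) / 2 := by
  classical
  set SP := hP.finite_support.toFinset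
  set SQ := hQ.finite_support.toFinset
  have hSP : support P ⊆ SP := by simp [SP]
  have hSQ : support Q ⊆ SQ := by simp [SQ]
  have hPQ : ∀ (F : α → β → ℝ) t s, P t * Q s * F t s ≠ 0 → t ∈ SP ∧ s ∈ SQ := fun _ t s h =>
    ⟨hSP (left_ne_zero_of_mul (left_ne_zero_of_mul h)),
      hSQ (right_ne_zero_of_mul (left_ne_zero_of_mul h))⟩
  have hP1 : ∑ t ∈ SP, P t = 1 := by
    rw [← finsum_eq_sum_of_support_subset _ hSP, hP.finsum_eq_one]
  have hQ1 : ∑ s ∈ SQ, Q s = 1 := by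
    rw [← finsum_eq_sum_of_support_subset _ hSQ, hQ.finsum_eq_one]
  rw [finsum_finsum_eq_sum_sum (hPQ fun t s => rdist (μ t) (ν s)),
    finsum_finsum_eq_sum_sum (hPQ fun t s => ent (conv (μ t) (negp (ν s)))),
    finsum_eq_sum_of_support_subset _ ((support_mul_subset_left _ _).trans hSP),
    finsum_eq_sum_of_support_subset _ ((support_mul_subset_left _ _).trans hSQ)]
  have hμ : ∑ t ∈ SP, ∑ s ∈ SQ, P t * Q s * (ent (μ t) / 2) = (∑ t ∈ SP, P t * ent (μ t)) / 2 := by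
    simp_rw [Finset.sum_div, ← Finset.sum_mul, ← Finset.mul_sum, hQ1, mul_one, mul_div_assoc]
  have hν : ∑ t ∈ SP, ∑ s ∈ SQ, P t * Q s * (ent (ν s) / 2) = (∑ s ∈ SQ, Q s * ent (ν s)) / 2 := by
    rw [Finset.sum_comm]
    simp_rw [Finset.sum_div, mul_comm (P _) (Q _), mul_assoc, ← Finset.mul_sum, ← Finset.sum_mul,
      hP1, one_mul, mul_div_assoc]
  simp only [rdist, mul_sub, Finset.sum_sub_distrib, hμ, hν]

theorem iterConv_succ' (p : G → ℝ) (m : ℕ) : iterConv p (m + 1) = conv p (iterConv p m) :=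
  conv_comm_s8 _ _

theorem condAt_succ (p : G → ℝ) (m : ℕ) : condAt p (m + 1) = condConv p (iterConv p m) := by
  ext t x
  simp only [condAt, condConv, convFiber, iterConv_succ', Nat.add_sub_cancel]

variable {p q : G → ℝ}

theorem condRdist_succ (hp : IsPMF p) (hq : IsPMF q) (m : ℕ) :
    condRdist p q (m + 1)
      = ∑ᶠ t, ∑ᶠ s, fiberEnt (diffFiber p (iterConv p m) q (iterConv q m) t s)
        - (∑ᶠ t, fiberEnt (convFiber p (iterConv p m) t)) / 2
        - (∑ᶠ s, fiberEnt (convFiber q (iterConv q m) s)) / 2 := by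
  have hp' := hp.iterConv m
  have hq' := hq.iterConv m
  rw [condRdist, iterConv_succ', iterConv_succ', condAt_succ, condAt_succ,
    finsum_finsum_mul_rdist (hp.conv hp') (hq.conv hq')]
  simp only [fiberEnt_diffFiber hp hp' hq hq', fiberEnt_convFiber hp hp',
    fiberEnt_convFiber hq hq']

end ConditionalRuzsa

/-- fibring application:
`d[X;Y] + d[(n-1)X;(n-1)Y] ≥ d[nX;nY] + d[X|nX; Y|nY]` for `n ≥ 2`. -/
theorem fibring_application {G : Type*} [AddCommGroup G] (p q : G → ℝ)
    (hp : IsPMF p) (hq : IsPMF q) (n : ℕ) (hn : 2 ≤ n) :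
    rdist (iterConv p n) (iterConv q n) + condRdist p q n ≤
      rdist p q + rdist (iterConv p (n - 1)) (iterConv q (n - 1)) := by
  obtain ⟨m, rfl⟩ : ∃ m, n = m + 1 := ⟨n - 1, by omega⟩
  have hfibring := finsum_finsum_fiberEnt_diffFiber_le hp hq (hp.iterConv m) (hq.iterConv m)
  have hchain_p := finsum_fiberEnt_convFiber hp (hp.iterConv m)
  have hchain_q := finsum_fiberEnt_convFiber hq (hq.iterConv m)
  rw [condRdist_succ hp hq, Nat.add_sub_cancel, iterConv_succ', iterConv_succ']
  simp only [rdist]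
  linarith
end
end

section
/- Let Y be a finitely supported G-valued random variable, gamma: G -> S^1 a character with |hat{p_Y}(gamma)|^2 >= 1 - eps^2/2 for some eps in (0,1), and let x1, x2 in G satisfy: the sum over x of min(p_{x1+Y}(x), p_{x2+Y}(x)) >= 1/2. Then |1 - gamma(x1 - x2)| <= 4 eps. -/
open scoped BigOperators Pointwise
noncomputable section

/-- Fourier coefficient of a (finitely supported) density at a character `γ : G → S¹`. -/
def fourierAt {G : Type*} [AddCommGroup G] (p : G → ℝ) (γ : AddChar G Circle) : ℂ :=
  ∑ᶠ x, (p x : ℂ) * (starRingEnd ℂ) (γ x : ℂ)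

/-!
Put `u := conj ∘ γ`, so that `f := p̂_Y(γ)` is the mean of `u(Y)` and, as `|u| = 1`, the
variance identity gives `𝔼 |u(Y) - f|² = 1 - |f|² ≤ ε²/2`. For every `x`,
`|1 - γ(x₁ - x₂)| = |u(x - x₁) - u(x - x₂)| ≤ |u(x - x₁) - f| + |u(x - x₂) - f|`.
The overlap `min(p_{x₁+Y}, p_{x₂+Y})` has mass at least `1/2` and is dominated by both translates,
so averaging the square of this inequality against it gives `|1 - γ(x₁ - x₂)|² ≤ 4ε²`.
-/

open Function

theorem Finset.sum_mul_norm_sub_sum_smul_sq {α E : Type*} [NormedAddCommGroup E]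
    [InnerProductSpace ℝ E] (s : Finset α) {p : α → ℝ} (hp : ∑ x ∈ s, p x = 1) (g : α → E) :
    ∑ x ∈ s, p x * ‖g x - ∑ y ∈ s, p y • g y‖ ^ 2 =
      ∑ x ∈ s, p x * ‖g x‖ ^ 2 - ‖∑ y ∈ s, p y • g y‖ ^ 2 := by
  have hexpand : ∀ x, p x * ‖g x - ∑ y ∈ s, p y • g y‖ ^ 2 = p x * ‖g x‖ ^ 2 -
      2 * inner ℝ (p x • g x) (∑ y ∈ s, p y • g y) + p x * ‖∑ y ∈ s, p y • g y‖ ^ 2 := by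
    intro x
    rw [norm_sub_sq_real, real_inner_smul_left]
    ring
  simp only [hexpand, Finset.sum_add_distrib, Finset.sum_sub_distrib, ← Finset.mul_sum,
    ← Finset.sum_mul, ← sum_inner, hp, real_inner_self_eq_norm_sq]
  ring

theorem finsum_mul_norm_sub_finsum_smul_sq {α E : Type*} [NormedAddCommGroup E]
    [InnerProductSpace ℝ E] {p : α → ℝ} (hp : p.HasFiniteSupport) (hp1 : ∑ᶠ x, p x = 1)
    (g : α → E) :
    ∑ᶠ x, p x * ‖g x - ∑ᶠ y, p y • g y‖ ^ 2 =
      ∑ᶠ x, p x * ‖g x‖ ^ 2 - ‖∑ᶠ y, p y • g y‖ ^ 2 := by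
  have hs : support p ⊆ hp.toFinset := fun x hx => hp.mem_toFinset.2 hx
  rw [finsum_eq_sum_of_support_subset _ hs] at hp1
  rw [finsum_eq_sum_of_support_subset (fun y => p y • g y)
      ((support_smul_subset_left p g).trans hs),
    finsum_eq_sum_of_support_subset _ ((support_mul_subset_left _ _).trans hs),
    finsum_eq_sum_of_support_subset _ ((support_mul_subset_left _ _).trans hs)]
  exact Finset.sum_mul_norm_sub_sum_smul_sq _ hp1 g

theorem finsum_comp_sub_right {G M : Type*} [AddGroup G] [AddCommMonoid M] (h : G → M) (a : G) :
    ∑ᶠ x, h (x - a) = ∑ᶠ y, h y :=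
  finsum_comp_equiv (Equiv.subRight a)

theorem mul_finsum_min_comp_sub_le {G : Type*} [AddCommGroup G] {q F : G → ℝ}
    (hq : q.HasFiniteSupport) (hq0 : ∀ x, 0 ≤ q x) (hF0 : ∀ x, 0 ≤ F x) {D : ℝ} {a b : G}
    (hD : ∀ x, D ≤ F (x - a) + F (x - b)) :
    D * ∑ᶠ x, min (q (x - a)) (q (x - b)) ≤ 2 * ∑ᶠ y, q y * F y := by
  have hfin (c : G) : (fun x => q (x - c) * F (x - c)).HasFiniteSupport :=
    (hq.comp_of_injective (sub_left_injective (b := c))).mul_left _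
  have hmin : (fun x => min (q (x - a)) (q (x - b)) * D).HasFiniteSupport :=
    ((hq.comp_of_injective (sub_left_injective (b := a))).min
      (hq.comp_of_injective (sub_left_injective (b := b)))).mul_left _
  rw [mul_comm, finsum_mul]
  calc ∑ᶠ x, min (q (x - a)) (q (x - b)) * D
      ≤ ∑ᶠ x, (q (x - a) * F (x - a) + q (x - b) * F (x - b)) := by
        refine finsum_le_finsum' hmin ((hfin a).add (hfin b)) fun x => ?_
        calc min (q (x - a)) (q (x - b)) * D
            ≤ min (q (x - a)) (q (x - b)) * (F (x - a) + F (x - b)) :=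
              mul_le_mul_of_nonneg_left (hD x) (le_min (hq0 _) (hq0 _))
          _ ≤ q (x - a) * F (x - a) + q (x - b) * F (x - b) := by
              rw [mul_add]
              exact add_le_add (mul_le_mul_of_nonneg_right (min_le_left _ _) (hF0 _))
                (mul_le_mul_of_nonneg_right (min_le_right _ _) (hF0 _))
    _ = 2 * ∑ᶠ y, q y * F y := by
        rw [finsum_add_distrib (hfin a) (hfin b), finsum_comp_sub_right (fun y => q y * F y),
          finsum_comp_sub_right (fun y => q y * F y)]
        ring

theorem AddChar.norm_apply_sub_sub_apply_sub {G : Type*} [AddCommGroup G]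
    (γ : AddChar G Circle) (x a b : G) :
    ‖(γ (x - a) : ℂ) - γ (x - b)‖ = ‖1 - (γ (a - b) : ℂ)‖ := by
  rw [show x - b = (x - a) + (a - b) by abel, AddChar.map_add_eq_mul, Circle.coe_mul,
    ← mul_one_sub, norm_mul, Circle.norm_coe, one_mul]

theorem character_almost_constant_general {G : Type*} [AddCommGroup G] (q : G → ℝ) (hq : IsPMF q)
    (γ : AddChar G Circle) (ε : ℝ) (hε0 : 0 < ε)
    (hγ : 1 - ε ^ 2 / 2 ≤ ‖fourierAt q γ‖ ^ 2)
    (x₁ x₂ : G)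
    (hmin : (1 : ℝ) / 2 ≤ ∑ᶠ x, min (q (x - x₁)) (q (x - x₂))) :
    ‖1 - (γ (x₁ - x₂) : ℂ)‖ ≤ 4 * ε := by
  obtain ⟨hq0, hqfin, hq1⟩ := hq
  set f := fourierAt q γ
  set u : G → ℂ := fun y => starRingEnd ℂ (γ y : ℂ)
  have hf : f = ∑ᶠ y, q y • u y := by simp [f, u, fourierAt, Complex.real_smul]
  have hvar : ∑ᶠ y, q y * ‖u y - f‖ ^ 2 = 1 - ‖f‖ ^ 2 := by
    rw [hf, finsum_mul_norm_sub_finsum_smul_sq hqfin hq1]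
    simp only [u, Complex.norm_conj, Circle.norm_coe, one_pow, mul_one, hq1]
  have hD (x : G) : ‖1 - (γ (x₁ - x₂) : ℂ)‖ ^ 2 / 2 ≤
      ‖u (x - x₁) - f‖ ^ 2 + ‖u (x - x₂) - f‖ ^ 2 := by
    have htri := norm_sub_le_norm_sub_add_norm_sub (u (x - x₁)) f (u (x - x₂))
    rw [← map_sub, Complex.norm_conj, AddChar.norm_apply_sub_sub_apply_sub,
      norm_sub_rev f] at htri
    nlinarith [norm_nonneg (1 - (γ (x₁ - x₂) : ℂ)),
      add_sq_le (a := ‖u (x - x₁) - f‖) (b := ‖u (x - x₂) - f‖)]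
  have hoverlap := mul_finsum_min_comp_sub_le hqfin hq0 (fun y => sq_nonneg ‖u y - f‖) hD
  rw [hvar] at hoverlap
  have hsq : ‖1 - (γ (x₁ - x₂) : ℂ)‖ ^ 2 ≤ (2 * ε) ^ 2 := by
    nlinarith [sq_nonneg ‖1 - (γ (x₁ - x₂) : ℂ)‖]
  have h2ε := (pow_le_pow_iff_left₀ (norm_nonneg _) (by positivity) two_ne_zero).1 hsq
  linarith

/-- if `|p̂_Y(γ)|² ≥ 1 - ε²/2` and
`∑ₓ min(p_{x₁+Y}(x), p_{x₂+Y}(x)) ≥ 1/2`, then `|1 - γ(x₁ - x₂)| ≤ 4ε`. -/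
theorem character_almost_constant {G : Type*} [AddCommGroup G] (q : G → ℝ) (hq : IsPMF q)
    (γ : AddChar G Circle) (ε : ℝ) (hε0 : 0 < ε) (hε1 : ε < 1)
    (hγ : 1 - ε ^ 2 / 2 ≤ ‖fourierAt q γ‖ ^ 2)
    (x₁ x₂ : G)
    (hmin : (1 : ℝ) / 2 ≤ ∑ᶠ x, min (q (x - x₁)) (q (x - x₂))) :
    ‖1 - (γ (x₁ - x₂) : ℂ)‖ ≤ 4 * ε :=
  character_almost_constant_general q hq γ ε hε0 hγ x₁ x₂ hmin
end
end

section
/- Global weak Bogolyubov lemma: Let A be a subset of a finite abelian group G with density alpha = |A|/|G| > 0. Then there exist a Bohr set B of rank O(log(2/alpha)) and radius Omega(1/log(2/alpha)), and an integer k = O(log(2/alpha)), such that B is contained in kA - kA (the k-fold sumset minus the k-fold sumset). -/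
open scoped BigOperators Pointwise
noncomputable section

/-- The Bohr set `B(S, ρ)`. -/
def bohrSet (G : Type*) [AddCommGroup G] (S : Set (AddChar G Circle)) (ρ : ℝ) : Set G :=
  {x | ∀ γ ∈ S, ‖(γ x : ℂ) - 1‖ ≤ ρ}

/-- The `k`-fold iterated sumset `kA = A + A + ⋯ + A`. -/
def iterSumset {G : Type*} [AddCommGroup G] (A : Set G) : ℕ → Set G
  | 0 => {0}
  | n + 1 => iterSumset A n + A

/-!
Write `m(γ) = |A|⁻¹ ∑_{a ∈ A} γ(a)`. Expanding `|m(γ)|^{2k}` and using orthogonality of characters,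
`∑_γ |m(γ)|^{2k} γ(x)` is a positive multiple of the number of representations
`x = b₁ + ⋯ + b_k - a₁ - ⋯ - a_k` with `aᵢ, bᵢ ∈ A`, so it suffices to show that this sum has
positive real part on the Bohr set. The trivial character contributes `1`; by Parseval, the
characters outside the large spectrum `{γ : |m(γ)| ≥ 9/10}` contribute at most
`(9/10)^{2k-2} |G|/|A| ≤ 1/2` once `k ≍ log(2/α)`. The large spectrum is handled by Chang's lemma:
the Riesz product `∏_{γ ∈ Λ} (1 + Re(c_γ γ(x))/4)`, with `c_γ m(γ) = |m(γ)|`, has mean `1` when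
`Λ` is dissociated; bounding it below by `exp ∑_γ (Re(c_γ γ(x))/4 - 1/12)` and applying Jensen on
`A` shows that dissociated subsets of the spectrum have size `O(log(1/α))`, so it lies in
the `{-1, 0, 1}`-span of `d = O(log(2/α))` characters. On the Bohr set of these characters with
radius `1/d`, every character of the span has `|γ(x) - 1| ≤ 1`, hence `Re γ(x) ≥ 0`.
-/

open Finset
open scoped ComplexConjugate

lemma exp_sub_one_div_twelve_le_one_add {u : ℝ} (hu : |u| ≤ 1 / 4) :
    Real.exp (u - 1 / 12) ≤ 1 + u := by
  obtain ⟨hu₁, hu₂⟩ := abs_le.1 hu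
  have hexp : 13 / 12 - u ≤ Real.exp (1 / 12 - u) := by
    linarith [Real.add_one_le_exp (1 / 12 - u)]
  have hinv : Real.exp (u - 1 / 12) * Real.exp (1 / 12 - u) = 1 := by
    rw [← Real.exp_add]; norm_num
  have hpos := Real.exp_pos (u - 1 / 12)
  calc Real.exp (u - 1 / 12)
      ≤ Real.exp (u - 1 / 12) * ((1 + u) * (13 / 12 - u)) :=
        le_mul_of_one_le_right hpos.le (by nlinarith)
    _ ≤ Real.exp (u - 1 / 12) * ((1 + u) * Real.exp (1 / 12 - u)) := by gcongr; linarith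
    _ = 1 + u := by rw [mul_left_comm, hinv, mul_one]

lemma neg_pow_mul_sq_le_pow_mul {t ε r : ℝ} (ht : 0 ≤ t) (htε : t ≤ ε) (hr : -1 ≤ r) (n : ℕ) :
    -(ε ^ (2 * n) * t ^ 2) ≤ t ^ (2 * (n + 1)) * r := by
  have hpow : t ^ (2 * n) ≤ ε ^ (2 * n) := by gcongr
  have hnn : 0 ≤ t ^ (2 * n) * t ^ 2 := by positivity
  calc -(ε ^ (2 * n) * t ^ 2) ≤ -(t ^ (2 * n) * t ^ 2) :=
        neg_le_neg (mul_le_mul_of_nonneg_right hpow (sq_nonneg t))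
    _ ≤ t ^ (2 * n) * t ^ 2 * r := by nlinarith
    _ = t ^ (2 * (n + 1)) * r := by ring

lemma card_mul_exp_sum_div_card_le_sum_exp {ι : Type*} {s : Finset ι} (hs : s.Nonempty)
    (g : ι → ℝ) : #s * Real.exp ((∑ i ∈ s, g i) / #s) ≤ ∑ i ∈ s, Real.exp (g i) := by
  have hs₀ : (0 : ℝ) < #s := by exact_mod_cast hs.card_pos
  have h := convexOn_exp.map_sum_le (t := s) (w := fun _ ↦ (#s : ℝ)⁻¹) (p := g)
    (fun _ _ ↦ by positivity) (by simp [hs₀.ne']) (fun _ _ ↦ Set.mem_univ _)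
  simp only [smul_eq_mul, ← mul_sum] at h
  rw [div_eq_inv_mul]
  calc #s * Real.exp ((#s : ℝ)⁻¹ * ∑ i ∈ s, g i)
      ≤ #s * ((#s : ℝ)⁻¹ * ∑ i ∈ s, Real.exp (g i)) := by gcongr
    _ = ∑ i ∈ s, Real.exp (g i) := by field_simp

lemma Complex.exists_norm_le_one_mul_eq_norm (z : ℂ) : ∃ c : ℂ, ‖c‖ ≤ 1 ∧ c * z = ‖z‖ := by
  refine ⟨‖z‖ / z, ?_, ?_⟩
  · rw [norm_div, Complex.norm_real, norm_norm]
    exact div_self_le_one _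
  · rcases eq_or_ne z 0 with rfl | hz
    · simp
    · exact div_mul_cancel₀ _ hz

lemma norm_prod_sub_one_le_sum_norm_sub_one {R ι : Type*} [SeminormedCommRing R]
    (s : Finset ι) (h : ι → R) (hh : ∀ i ∈ s, ‖h i‖ ≤ 1) :
    ‖∏ i ∈ s, h i - 1‖ ≤ ∑ i ∈ s, ‖h i - 1‖ := by
  induction s using Finset.cons_induction with
  | empty => simp
  | cons a s ha ih =>
    rw [prod_cons, sum_cons]
    have hsplit : h a * ∏ i ∈ s, h i - 1 = h a * (∏ i ∈ s, h i - 1) + (h a - 1) := by ring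
    have hrest := ih fun i hi ↦ hh i (mem_cons_of_mem hi)
    calc ‖h a * ∏ i ∈ s, h i - 1‖
        ≤ ‖h a‖ * ‖∏ i ∈ s, h i - 1‖ + ‖h a - 1‖ := by
          rw [hsplit]; exact (norm_add_le _ _).trans (by gcongr; exact norm_mul_le _ _)
      _ ≤ ‖h a - 1‖ + ∑ i ∈ s, ‖h i - 1‖ := by
          nlinarith [hh a (mem_cons_self a s), norm_nonneg (∏ i ∈ s, h i - 1)]

lemma AddDissociated.eq_zero_of_sum_zsmul_eq_zero {α : Type*} [AddCommGroup α] {s : Finset α}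
    (hs : AddDissociated (s : Set α)) {ε : α → ℤ} (hε : ∀ a, ε a = -1 ∨ ε a = 0 ∨ ε a = 1)
    (h : ∑ a ∈ s, ε a • a = 0) {a : α} (ha : a ∈ s) : ε a = 0 := by
  classical
  have hsplit : ∑ a ∈ s, ε a • a = ∑ a ∈ s with ε a = 1, a - ∑ a ∈ s with ε a = -1, a := by
    rw [sum_filter, sum_filter, ← sum_sub_distrib]
    refine sum_congr rfl fun b _ ↦ ?_
    rcases hε b with hb | hb | hb <;> simp [hb]
  have hpos_eq_neg : {a ∈ s | ε a = 1} = {a ∈ s | ε a = -1} :=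
    hs (by simp) (by simp) (sub_eq_zero.1 (hsplit ▸ h))
  rcases hε a with h₁ | h₀ | h₁
  · have : a ∈ {a ∈ s | ε a = 1} := hpos_eq_neg ▸ mem_filter.2 ⟨ha, h₁⟩
    simp [(mem_filter.1 this).2] at h₁
  · exact h₀
  · have : a ∈ {a ∈ s | ε a = -1} := hpos_eq_neg ▸ mem_filter.2 ⟨ha, h₁⟩
    simp [(mem_filter.1 this).2] at h₁

lemma AddChar.map_sum_eq_prod {A M ι : Type*} [AddCommMonoid A] [CommMonoid M]
    (ψ : AddChar A M) (s : Finset ι) (f : ι → A) : ψ (∑ i ∈ s, f i) = ∏ i ∈ s, ψ (f i) := by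
  induction s using Finset.cons_induction with
  | empty => simp
  | cons a s ha ih => rw [sum_cons, prod_cons, AddChar.map_add_eq_mul, ih]

lemma sum_mem_iterSumset {G : Type*} [AddCommGroup G] {A : Set G} {k : ℕ} {f : Fin k → G}
    (hf : ∀ i, f i ∈ A) : ∑ i, f i ∈ iterSumset A k := by
  induction k with
  | zero => simp [iterSumset]
  | succ k ih =>
    rw [Fin.sum_univ_castSucc]
    exact Set.add_mem_add (ih fun i ↦ hf _) (hf _)

section Characters

variable {G : Type*} [AddCommGroup G]

/-- The Fourier coefficient of the uniform distribution on `A`, up to conjugating the character. -/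
def uniformFourier (A : Finset G) (γ : AddChar G ℂ) : ℂ := (∑ a ∈ A, γ a) / #A

lemma uniformFourier_zero {A : Finset G} (hA : A.Nonempty) : uniformFourier A 0 = 1 := by
  simp [uniformFourier, hA.card_pos.ne']

lemma card_mul_uniformFourier (A : Finset G) (γ : AddChar G ℂ) :
    #A * uniformFourier A γ = ∑ a ∈ A, γ a := by
  rcases A.eq_empty_or_nonempty with rfl | hA
  · simp
  · exact mul_div_cancel₀ _ (by exact_mod_cast hA.card_pos.ne')

lemma norm_uniformFourier_pow (A : Finset G) (γ : AddChar G ℂ) (k : ℕ) :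
    ‖uniformFourier A γ‖ ^ k = ‖(∑ a ∈ A, γ a) ^ k‖ / (#A : ℝ) ^ k := by
  rw [uniformFourier, norm_div, div_pow, norm_pow, Complex.norm_natCast]

variable [Fintype G]

/-- The large spectrum `Spec_ε(U_A)`. -/
def largeSpectrum (A : Finset G) (ε : ℝ) : Finset (AddChar G ℂ) :=
  {γ | ε ≤ ‖uniformFourier A γ‖}

lemma mem_largeSpectrum {A : Finset G} {ε : ℝ} {γ : AddChar G ℂ} :
    γ ∈ largeSpectrum A ε ↔ ε ≤ ‖uniformFourier A γ‖ := by
  simp [largeSpectrum]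

lemma AddDissociated.sum_prod_sum_mul_zsmul_apply {Λ : Finset (AddChar G ℂ)}
    (hΛ : AddDissociated (Λ : Set (AddChar G ℂ))) (b : AddChar G ℂ → ℤ → ℂ) :
    ∑ x, ∏ γ ∈ Λ, ∑ j ∈ ({-1, 0, 1} : Finset ℤ), b γ j * (j • γ) x
      = Fintype.card G * ∏ γ ∈ Λ, b γ 0 := by
  classical
  -- extend the product to all characters, with the trivial factor `1` outside `Λ`
  set t : AddChar G ℂ → Finset ℤ := fun γ ↦ if γ ∈ Λ then {-1, 0, 1} else {0}
  set b' : AddChar G ℂ → ℤ → ℂ := fun γ j ↦ if γ ∈ Λ then b γ j else 1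
  have hextend : ∀ x, ∏ γ ∈ Λ, ∑ j ∈ ({-1, 0, 1} : Finset ℤ), b γ j * (j • γ) x
      = ∑ p ∈ Fintype.piFinset t, (∏ γ, b' γ (p γ)) * (∑ γ, p γ • γ) x := fun x ↦
    calc ∏ γ ∈ Λ, ∑ j ∈ ({-1, 0, 1} : Finset ℤ), b γ j * (j • γ) x
        = ∏ γ ∈ Λ, ∑ j ∈ t γ, b' γ j * (j • γ) x := prod_congr rfl fun γ hγ ↦ by simp [t, b', hγ]
      _ = ∏ γ, ∑ j ∈ t γ, b' γ j * (j • γ) x :=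
        prod_subset (subset_univ Λ) fun γ _ hγ ↦ by simp [t, b', hγ]
      _ = ∑ p ∈ Fintype.piFinset t, ∏ γ, b' γ (p γ) * (p γ • γ) x := prod_univ_sum _ _
      _ = _ := sum_congr rfl fun p _ ↦ by rw [AddChar.sum_apply, prod_mul_distrib]
  have hkill : ∀ p ∈ Fintype.piFinset t, p ≠ 0 →
      ∑ x, (∏ γ, b' γ (p γ)) * (∑ γ, p γ • γ) x = 0 := by
    intro p hp hp₀
    have hval : ∀ γ, (p γ = -1 ∨ p γ = 0 ∨ p γ = 1) ∧ (γ ∉ Λ → p γ = 0) := fun γ ↦ by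
      have := Fintype.mem_piFinset.1 hp γ
      by_cases hγ : γ ∈ Λ <;> simp_all [t]
    rw [← mul_sum, AddChar.sum_eq_zero_iff_ne_zero.2, mul_zero]
    intro hzero
    have hzero' : ∑ χ ∈ Λ, p χ • χ = 0 := by
      rw [← hzero]
      exact sum_subset (subset_univ Λ) fun χ _ hχ ↦ by simp [(hval χ).2 hχ]
    refine hp₀ (funext fun γ ↦ ?_)
    by_cases hγ : γ ∈ Λ
    · exact hΛ.eq_zero_of_sum_zsmul_eq_zero (fun χ ↦ (hval χ).1) hzero' hγ
    · exact (hval γ).2 hγ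
  simp_rw [hextend]
  rw [sum_comm, sum_eq_single_of_mem 0
    (Fintype.mem_piFinset.2 fun γ ↦ by by_cases hγ : γ ∈ Λ <;> simp [t, hγ]) hkill]
  simp [b', mul_comm]

lemma AddDissociated.sum_prod_one_add_re_mul_apply {Λ : Finset (AddChar G ℂ)}
    (hΛ : AddDissociated (Λ : Set (AddChar G ℂ))) (c : AddChar G ℂ → ℂ) :
    ∑ x, ∏ γ ∈ Λ, (1 + (c γ * γ x).re) = Fintype.card G := by
  set b : AddChar G ℂ → ℤ → ℂ := fun γ j ↦
    if j = 0 then 1 else if j = 1 then c γ / 2 else conj (c γ) / 2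
  have hexpand : ∀ x γ, ((1 + (c γ * γ x).re : ℝ) : ℂ)
      = ∑ j ∈ ({-1, 0, 1} : Finset ℤ), b γ j * (j • γ) x := by
    intro x γ
    rw [Complex.ofReal_add, Complex.ofReal_one, Complex.re_eq_add_conj, map_mul]
    simp [b, AddChar.inv_apply_eq_conj]
    ring
  have h := hΛ.sum_prod_sum_mul_zsmul_apply b
  simp only [show ∀ γ, b γ 0 = 1 from fun γ ↦ if_pos rfl, prod_const_one, mul_one] at h
  simp_rw [← hexpand] at h
  exact_mod_cast h

lemma norm_apply_sub_one_le_sum_of_mem_addSpan [DecidableEq (AddChar G ℂ)]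
    {Λ : Finset (AddChar G ℂ)} {γ : AddChar G ℂ} (hγ : γ ∈ Λ.addSpan) (x : G) :
    ‖γ x - 1‖ ≤ ∑ χ ∈ Λ, ‖χ x - 1‖ := by
  obtain ⟨ε, hε, rfl⟩ := mem_addSpan.1 hγ
  rw [AddChar.sum_apply]
  refine (norm_prod_sub_one_le_sum_norm_sub_one _ _ fun χ _ ↦ by simp).trans
    (sum_le_sum fun χ _ ↦ ?_)
  rcases hε χ with h | h | h <;> simp only [AddChar.zsmul_apply, h, zpow_neg_one, zpow_zero,
    zpow_one, sub_self, norm_zero, norm_nonneg, le_refl]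
  rw [AddChar.inv_apply_eq_conj, ← RCLike.norm_conj (χ x - 1), map_sub, map_one]

/-- Orthogonality of characters counts the solutions of `u i + x = u j`. -/
lemma sum_norm_sum_apply_sq_mul_apply [DecidableEq G] {ι : Type*} (s : Finset ι) (u : ι → G)
    (x : G) :
    ∑ γ : AddChar G ℂ, ((‖∑ i ∈ s, γ (u i)‖ ^ 2 : ℝ) : ℂ) * γ x
      = Fintype.card G * #{p ∈ s ×ˢ s | u p.1 + x = u p.2} := by
  have hexpand : ∀ γ : AddChar G ℂ, ((‖∑ i ∈ s, γ (u i)‖ ^ 2 : ℝ) : ℂ) * γ x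
      = ∑ p ∈ s ×ˢ s, γ (u p.1 - u p.2 + x) := by
    intro γ
    rw [Complex.ofReal_pow, ← Complex.mul_conj', map_sum, Finset.sum_mul_sum]
    simp_rw [sum_mul]
    rw [← sum_product']
    refine sum_congr rfl fun p _ ↦ ?_
    rw [← AddChar.map_neg_eq_conj, ← AddChar.map_add_eq_mul, ← AddChar.map_add_eq_mul,
      ← sub_eq_add_neg]
  simp_rw [hexpand]
  rw [sum_comm]
  simp_rw [AddChar.sum_apply_eq_ite, sum_ite, sum_const_zero, add_zero, sum_const, nsmul_eq_mul,
    mul_comm]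
  congr 3
  exact filter_congr fun p _ ↦ by rw [sub_add_eq_add_sub, sub_eq_zero]

lemma sum_norm_uniformFourier_sq (A : Finset G) :
    ∑ γ, ‖uniformFourier A γ‖ ^ 2 = Fintype.card G / #A := by
  classical
  have h := sum_norm_sum_apply_sq_mul_apply A id 0
  have hdiag : #{p ∈ A ×ˢ A | id p.1 + 0 = id p.2} = #A := by
    rw [← diag_card A, diag_eq_filter]
    simp
  rw [hdiag] at h
  simp only [AddChar.map_zero_eq_one, mul_one] at h
  have h' : ∑ γ : AddChar G ℂ, ‖∑ a ∈ A, γ a‖ ^ 2 = Fintype.card G * #A := by exact_mod_cast h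
  simp_rw [norm_uniformFourier_pow, norm_pow, ← sum_div, h']
  rcases eq_or_ne (#A : ℝ) 0 with hA | hA
  · simp [hA]
  · field_simp

lemma mem_iterSumset_sub_of_sum_ne_zero (A : Finset G) (k : ℕ) {x : G}
    (hx : ∑ γ : AddChar G ℂ, ‖uniformFourier A γ‖ ^ (2 * k) * (γ x).re ≠ 0) :
    x ∈ iterSumset (A : Set G) k - iterSumset A k := by
  classical
  set P := Fintype.piFinset fun _ : Fin k ↦ A
  have hpow : ∀ γ : AddChar G ℂ, ‖uniformFourier A γ‖ ^ (2 * k)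
      = ‖∑ f ∈ P, γ (∑ i, f i)‖ ^ 2 / (#A : ℝ) ^ (2 * k) := by
    intro γ
    simp_rw [mul_comm 2 k, pow_mul, norm_uniformFourier_pow, div_pow, sum_pow',
      AddChar.map_sum_eq_prod]
    rfl
  obtain ⟨⟨f, g⟩, hfg⟩ : {p ∈ P ×ˢ P | ∑ i, p.1 i + x = ∑ i, p.2 i}.Nonempty := by
    refine nonempty_iff_ne_empty.2 fun hempty ↦ hx ?_
    have h := sum_norm_sum_apply_sq_mul_apply P (fun f ↦ ∑ i, f i) x
    rw [hempty, Finset.card_empty, Nat.cast_zero, mul_zero] at h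
    simp_rw [hpow, div_mul_eq_mul_div, ← sum_div]
    rw [div_eq_zero_iff]
    left
    have h' := congrArg Complex.re h
    simp only [Complex.re_sum, Complex.re_ofReal_mul, Complex.zero_re] at h'
    exact h'
  simp only [mem_filter, mem_product, Fintype.mem_piFinset, P] at hfg
  exact Set.mem_sub.2 ⟨_, sum_mem_iterSumset hfg.1.2, _, sum_mem_iterSumset hfg.1.1,
    by rw [← hfg.2]; abel⟩

lemma AddDissociated.sum_exp_sum_re_mul_apply_le_card {Λ : Finset (AddChar G ℂ)}
    (hΛ : AddDissociated (Λ : Set (AddChar G ℂ))) {c : AddChar G ℂ → ℂ}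
    (hc : ∀ γ ∈ Λ, ‖c γ‖ ≤ 1) :
    ∑ x, Real.exp (∑ γ ∈ Λ, ((c γ * γ x).re / 4 - 1 / 12)) ≤ Fintype.card G := by
  refine (sum_le_sum fun x _ ↦ ?_).trans (hΛ.sum_prod_one_add_re_mul_apply (c · / 4)).le
  rw [Real.exp_sum]
  refine prod_le_prod (fun _ _ ↦ (Real.exp_pos _).le) fun γ hγ ↦ ?_
  rw [div_mul_eq_mul_div, Complex.div_ofNat_re]
  refine exp_sub_one_div_twelve_le_one_add ?_
  rw [abs_div, abs_of_pos (by norm_num : (0 : ℝ) < 4), div_le_div_iff_of_pos_right (by norm_num)]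
  calc |(c γ * γ x).re| ≤ ‖c γ * γ x‖ := Complex.abs_re_le_norm _
    _ ≤ 1 := by rw [norm_mul, AddChar.norm_apply, mul_one]; exact hc γ hγ

/-- Chang's lemma. -/
theorem mul_card_le_log_of_addDissociated {A : Finset G} (hA : A.Nonempty)
    {Λ : Finset (AddChar G ℂ)} (hΛ : AddDissociated (Λ : Set (AddChar G ℂ))) {ε : ℝ}
    (hε : ∀ γ ∈ Λ, ε ≤ ‖uniformFourier A γ‖) :
    (3 * ε - 1) * #Λ ≤ 12 * Real.log (Fintype.card G / #A) := by
  choose c hc_norm hc_mul using fun γ ↦ Complex.exists_norm_le_one_mul_eq_norm (uniformFourier A γ)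
  set g : G → ℝ := fun x ↦ ∑ γ ∈ Λ, ((c γ * γ x).re / 4 - 1 / 12)
  have hA₀ : (0 : ℝ) < #A := by exact_mod_cast hA.card_pos
  have hsum_g : ∑ x ∈ A, g x = ∑ γ ∈ Λ, (#A * ‖uniformFourier A γ‖ / 4 - #A / 12) := by
    rw [sum_comm]
    refine sum_congr rfl fun γ _ ↦ ?_
    rw [sum_sub_distrib, ← sum_div, ← Complex.re_sum, ← mul_sum, ← card_mul_uniformFourier,
      mul_left_comm, hc_mul, sum_const, nsmul_eq_mul]
    simp only [← Complex.ofReal_natCast, ← Complex.ofReal_mul, Complex.ofReal_re]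
    ring
  have hmean : (3 * ε - 1) * #Λ / 12 ≤ (∑ x ∈ A, g x) / #A := by
    rw [le_div_iff₀ hA₀, hsum_g]
    calc (3 * ε - 1) * #Λ / 12 * #A = ∑ γ ∈ Λ, (#A * ε / 4 - #A / 12) := by
          rw [sum_const, nsmul_eq_mul]; ring
      _ ≤ ∑ γ ∈ Λ, (#A * ‖uniformFourier A γ‖ / 4 - #A / 12) := by
          gcongr with γ hγ; exact hε γ hγ
  have hcard : #A * Real.exp ((3 * ε - 1) * #Λ / 12) ≤ Fintype.card G :=
    calc #A * Real.exp ((3 * ε - 1) * #Λ / 12)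
        ≤ #A * Real.exp ((∑ x ∈ A, g x) / #A) := by gcongr
      _ ≤ ∑ x ∈ A, Real.exp (g x) := card_mul_exp_sum_div_card_le_sum_exp hA g
      _ ≤ ∑ x, Real.exp (g x) :=
        sum_le_sum_of_subset_of_nonneg (subset_univ A) fun _ _ _ ↦ (Real.exp_pos _).le
      _ ≤ Fintype.card G := hΛ.sum_exp_sum_re_mul_apply_le_card fun γ _ ↦ hc_norm γ
  have hlog : (3 * ε - 1) * #Λ / 12 ≤ Real.log (Fintype.card G / #A) := by
    rwa [Real.le_log_iff_exp_le (by positivity), le_div_iff₀ hA₀, mul_comm]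
  linarith

lemma one_sub_pow_mul_le_sum_norm_uniformFourier_pow_mul_re {A : Finset G} (hA : A.Nonempty)
    {ε : ℝ} (hε₀ : 0 ≤ ε) (hε₁ : ε ≤ 1) {x : G}
    (hx : ∀ γ ∈ largeSpectrum A ε, 0 ≤ (γ x).re) (n : ℕ) :
    1 - ε ^ (2 * n) * (Fintype.card G / #A)
      ≤ ∑ γ, ‖uniformFourier A γ‖ ^ (2 * (n + 1)) * (γ x).re := by
  set f : AddChar G ℂ → ℝ := fun γ ↦ ‖uniformFourier A γ‖ ^ (2 * (n + 1)) * (γ x).re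
  have hlarge : 1 ≤ ∑ γ ∈ largeSpectrum A ε, f γ := by
    have h₀ : (0 : AddChar G ℂ) ∈ largeSpectrum A ε := by
      simp [mem_largeSpectrum, uniformFourier_zero hA, hε₁]
    calc 1 = f 0 := by simp [f, uniformFourier_zero hA]
      _ ≤ ∑ γ ∈ largeSpectrum A ε, f γ :=
        single_le_sum (f := f) (fun γ hγ ↦ mul_nonneg (by positivity) (hx γ hγ)) h₀
  have hsmall : -(ε ^ (2 * n) * (Fintype.card G / #A)) ≤ ∑ γ ∈ (largeSpectrum A ε)ᶜ, f γ := by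
    have hterm : ∀ γ ∈ (largeSpectrum A ε)ᶜ,
        -(ε ^ (2 * n) * ‖uniformFourier A γ‖ ^ 2) ≤ f γ := fun γ hγ ↦
      neg_pow_mul_sq_le_pow_mul (norm_nonneg _)
        (le_of_lt (by simpa [mem_largeSpectrum] using hγ))
        (neg_le_of_abs_le ((Complex.abs_re_le_norm _).trans (AddChar.norm_apply _ _).le)) n
    have hparseval : ∑ γ ∈ (largeSpectrum A ε)ᶜ, ε ^ (2 * n) * ‖uniformFourier A γ‖ ^ 2
        ≤ ε ^ (2 * n) * (Fintype.card G / #A) := by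
      rw [← sum_norm_uniformFourier_sq A, mul_sum]
      exact sum_le_sum_of_subset_of_nonneg (subset_univ _) fun _ _ _ ↦ by positivity
    have := sum_le_sum hterm
    rw [sum_neg_distrib] at this
    linarith
  rw [← sum_add_sum_compl (largeSpectrum A ε)]
  linarith

lemma subset_iterSumset_sub_of_largeSpectrum_subset_addSpan [DecidableEq (AddChar G ℂ)]
    {A : Finset G} (hA : A.Nonempty) {ε : ℝ} (hε₀ : 0 ≤ ε) (hε₁ : ε ≤ 1)
    {Λ : Finset (AddChar G ℂ)} (hspan : largeSpectrum A ε ⊆ Λ.addSpan) {ρ : ℝ}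
    (hρ : #Λ * ρ ≤ 1) {n : ℕ} (hn : ε ^ (2 * n) * (Fintype.card G / #A) < 1) :
    {x | ∀ χ ∈ Λ, ‖χ x - 1‖ ≤ ρ} ⊆ iterSumset (A : Set G) (n + 1) - iterSumset A (n + 1) := by
  intro x hx
  refine mem_iterSumset_sub_of_sum_ne_zero A (n + 1) (ne_of_gt ?_)
  refine (sub_pos.2 hn).trans_le
    (one_sub_pow_mul_le_sum_norm_uniformFourier_pow_mul_re hA hε₀ hε₁ (fun γ hγ ↦ ?_) n)
  have hnear : ‖γ x - 1‖ ≤ 1 :=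
    calc ‖γ x - 1‖ ≤ ∑ χ ∈ Λ, ‖χ x - 1‖ := norm_apply_sub_one_le_sum_of_mem_addSpan (hspan hγ) x
      _ ≤ #Λ * ρ := by simpa using sum_le_card_nsmul Λ _ ρ hx
      _ ≤ 1 := hρ
  have hre : 1 - (γ x).re ≤ ‖γ x - 1‖ := by
    simpa [norm_sub_rev] using Complex.re_le_norm (1 - γ x)
  linarith

lemma bohrSet_image_circleEquivComplex_symm [DecidableEq (AddChar G Circle)]
    (Λ : Finset (AddChar G ℂ)) (ρ : ℝ) :
    bohrSet G ↑(Λ.image AddChar.circleEquivComplex.symm) ρ = {x | ∀ χ ∈ Λ, ‖χ x - 1‖ ≤ ρ} := by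
  ext x
  simp [bohrSet]
  rfl

theorem exists_bohrSet_subset_iterSumset_sub {A : Finset G} (hA : A.Nonempty) {ε : ℝ}
    (hε₀ : 0 ≤ ε) (hε₁ : ε ≤ 1) {d n : ℕ}
    (hd : ∀ Λ ⊆ largeSpectrum A ε, AddDissociated (Λ : Set (AddChar G ℂ)) → #Λ ≤ d)
    (hn : ε ^ (2 * n) * (Fintype.card G / #A) < 1) :
    ∃ S : Finset (AddChar G Circle), #S ≤ d ∧
      bohrSet G S (1 / d) ⊆ iterSumset (A : Set G) (n + 1) - iterSumset A (n + 1) := by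
  classical
  obtain ⟨Λ, -, hΛd, hspan⟩ := exists_subset_addSpan_card_le_of_forall_addDissociated hd
  refine ⟨Λ.image AddChar.circleEquivComplex.symm, card_image_le.trans hΛd, ?_⟩
  rw [bohrSet_image_circleEquivComplex_symm]
  refine subset_iterSumset_sub_of_largeSpectrum_subset_addSpan hA hε₀ hε₁ hspan ?_ hn
  rw [mul_one_div]
  exact div_le_one_of_le₀ (by exact_mod_cast hΛd) (Nat.cast_nonneg _)

end Characters

lemma nine_div_ten_pow_le_exp_neg (m : ℕ) : (9 / 10 : ℝ) ^ (10 * m) ≤ Real.exp (-m) := by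
  have h : (9 / 10 : ℝ) ≤ Real.exp (-(1 / 10)) := by
    linarith [Real.one_sub_le_exp_neg (1 / 10 : ℝ)]
  calc (9 / 10 : ℝ) ^ (10 * m) ≤ Real.exp (-(1 / 10)) ^ (10 * m) := by gcongr
    _ = Real.exp (-m) := by rw [← Real.exp_nat_mul]; push_cast; ring_nf

lemma nine_div_ten_pow_mul_div_lt_one {a b : ℝ} (ha : 0 < a) (hb : 0 < b) :
    (9 / 10 : ℝ) ^ (2 * (5 * ⌈Real.log (2 * b / a)⌉₊)) * (b / a) < 1 :=
  calc (9 / 10 : ℝ) ^ (2 * (5 * ⌈Real.log (2 * b / a)⌉₊)) * (b / a)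
      ≤ Real.exp (-Real.log (2 * b / a)) * (b / a) := by
        rw [show 2 * (5 * ⌈Real.log (2 * b / a)⌉₊) = 10 * ⌈Real.log (2 * b / a)⌉₊ by ring]
        gcongr
        exact (nine_div_ten_pow_le_exp_neg _).trans (Real.exp_le_exp.2 (neg_le_neg (Nat.le_ceil _)))
    _ = 1 / 2 := by rw [Real.exp_neg, Real.exp_log (by positivity), inv_div]; field_simp
    _ < 1 := by norm_num

lemma one_le_two_mul_log_two_mul_div {a b : ℝ} (ha : 0 < a) (hab : a ≤ b) :
    1 ≤ 2 * Real.log (2 * b / a) := by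
  have : Real.log 2 ≤ Real.log (2 * b / a) :=
    Real.log_le_log two_pos (by rw [le_div_iff₀ ha]; linarith)
  linarith [Real.log_two_gt_d9]

/-- global weak Bogolyubov lemma: there is an absolute constant `C > 0` such that
for every finite abelian group `G` and nonempty `A ⊆ G` of density `α`, there are a Bohr set of
rank `≤ C log(2/α)` and radius `≥ 1/(C log(2/α))` and `k ≤ C log(2/α)` with `B ⊆ kA - kA`. -/
theorem weak_bogolyubov_global :
    ∃ C : ℝ, 0 < C ∧
      ∀ (G : Type) [AddCommGroup G] [Fintype G] (A : Finset G), A.Nonempty →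
        ∃ (S : Finset (AddChar G Circle)) (ρ : ℝ) (k : ℕ),
          0 < ρ ∧ 1 ≤ k ∧
          (S.card : ℝ) ≤ C * Real.log (2 * Fintype.card G / A.card) ∧
          1 / (C * Real.log (2 * Fintype.card G / A.card)) ≤ ρ ∧
          (k : ℝ) ≤ C * Real.log (2 * Fintype.card G / A.card) ∧
          bohrSet G ↑S ρ ⊆ iterSumset (↑A) k - iterSumset (↑A) k := by
  refine ⟨20, by norm_num, fun G _ _ A hA ↦ ?_⟩
  set N : ℝ := (Fintype.card G : ℝ)
  set L := Real.log (2 * N / #A)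
  have hA₀ : (0 : ℝ) < #A := by exact_mod_cast hA.card_pos
  have hAN : (#A : ℝ) ≤ N := Nat.cast_le.2 (card_le_univ A)
  have hL : 1 ≤ 2 * L := one_le_two_mul_log_two_mul_div hA₀ hAN
  have hdiss : ∀ Λ ⊆ largeSpectrum A (9 / 10), AddDissociated (Λ : Set (AddChar G ℂ)) →
      #Λ ≤ ⌈8 * L⌉₊ := fun Λ hΛ hdis ↦ by
    have hchang := mul_card_le_log_of_addDissociated hA hdis fun γ hγ ↦ mem_largeSpectrum.1 (hΛ hγ)
    have hlog : Real.log (N / #A) ≤ L :=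
      Real.log_le_log (by positivity) (div_le_div_of_nonneg_right (by linarith) hA₀.le)
    exact_mod_cast (show (#Λ : ℝ) ≤ 8 * L by linarith).trans (Nat.le_ceil _)
  obtain ⟨S, hS, hSB⟩ := exists_bohrSet_subset_iterSumset_sub hA (by norm_num) (by norm_num) hdiss
    (nine_div_ten_pow_mul_div_lt_one hA₀ (hA₀.trans_le hAN))
  have hd₀ : 0 < ⌈8 * L⌉₊ := Nat.ceil_pos.2 (by linarith)
  have hd : (⌈8 * L⌉₊ : ℝ) ≤ 8 * L + 1 := (Nat.ceil_lt_add_one (by linarith)).le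
  have hk : (⌈L⌉₊ : ℝ) ≤ L + 1 := (Nat.ceil_lt_add_one (by linarith)).le
  refine ⟨S, 1 / ⌈8 * L⌉₊, 5 * ⌈L⌉₊ + 1, by positivity, by omega, ?_, ?_, ?_, hSB⟩
  · exact (Nat.cast_le.2 hS).trans (by linarith)
  · exact one_div_le_one_div_of_le (by positivity) (by linarith)
  · push_cast; linarith
end
end
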